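/- There exists a constant δ₀ ∈ (0,1) such that for all δ ∈ (0,δ₀] and all ν ∈ (0, 1/(10√(log(1/δ)))), letting t = Φ⁻¹(δ), one has Φ(t) - Φ(t-ν) ≥ (1/8)·δ·ν·√(log(1/δ)). -/

import Mathlib

/-!
Write `δ = exp (-L)` and `Φ(t) = δ`. Comparing `Φ` with the density one unit to the left, and the
Mills inequality `-t Φ(t) ≤ φ(t)`, locate `t` between `-√(2L)` and `-√L`. Then
`Φ(t) - Φ(t - ν) ≥ ν φ(t - ν) = ν φ(t) exp (tν - ν²/2)`; the exponential factor is bounded below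
because `|t| ν ≤ 2√L ν < 1/5`, and `φ(t) ≥ -t δ ≥ √L δ` by Mills again.
-/

open MeasureTheory Real Set Filter Topology

/-- The standard Gaussian CDF. -/
noncomputable def gaussCDF (t : ℝ) : ℝ :=
  ∫ x in Set.Iic t, Real.exp (-x ^ 2 / 2) / Real.sqrt (2 * Real.pi)

noncomputable def gaussPDF (x : ℝ) : ℝ := exp (-x ^ 2 / 2) / √(2 * π)

lemma gaussPDF_nonneg (x : ℝ) : 0 ≤ gaussPDF x := by
  unfold gaussPDF; positivity

lemma gaussPDF_sub (t ν : ℝ) : gaussPDF (t - ν) = gaussPDF t * exp (t * ν - ν ^ 2 / 2) := by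
  rw [gaussPDF, gaussPDF, div_mul_eq_mul_div, ← exp_add]
  ring_nf

lemma integrable_gaussPDF : Integrable gaussPDF := by
  have h := (integrable_exp_neg_mul_sq (b := 1 / 2) (by norm_num)).div_const (√(2 * π))
  refine h.congr (ae_of_all _ fun x => ?_)
  simp only [gaussPDF]
  ring_nf

lemma integrable_neg_mul_gaussPDF : Integrable fun x => -x * gaussPDF x := by
  have h := ((integrable_mul_exp_neg_mul_sq (b := 1 / 2) (by norm_num)).div_const (√(2 * π))).neg
  refine h.congr (ae_of_all _ fun x => ?_)
  simp only [Pi.neg_apply, gaussPDF]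
  ring_nf

lemma hasDerivAt_gaussPDF (x : ℝ) : HasDerivAt gaussPDF (-x * gaussPDF x) x := by
  have h := ((((hasDerivAt_pow 2 x).fun_neg).div_const 2).exp).div_const (√(2 * π))
  refine h.congr_deriv ?_
  simp only [gaussPDF]
  ring

lemma tendsto_gaussPDF_atBot : Tendsto gaussPDF atBot (𝓝 0) := by
  have h : Tendsto (fun x : ℝ => -x ^ 2 / 2) atBot atBot :=
    (tendsto_neg_atTop_atBot.comp ((tendsto_pow_atTop two_ne_zero).comp
      tendsto_neg_atBot_atTop)).atBot_div_const two_pos |>.congr fun x => by simp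
  have hexp := (tendsto_exp_atBot.comp h).div_const (√(2 * π))
  rw [zero_div] at hexp
  exact hexp

lemma gaussCDF_sub_gaussCDF {a b : ℝ} (hab : a ≤ b) :
    gaussCDF b - gaussCDF a = ∫ x in Ioc a b, gaussPDF x := by
  change (∫ x in Iic b, gaussPDF x) - ∫ x in Iic a, gaussPDF x = _
  rw [intervalIntegral.integral_Iic_sub_Iic
    integrable_gaussPDF.integrableOn integrable_gaussPDF.integrableOn,
    intervalIntegral.integral_of_le hab]

lemma gaussCDF_nonneg (t : ℝ) : 0 ≤ gaussCDF t :=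
  setIntegral_nonneg measurableSet_Iic fun x _ => gaussPDF_nonneg x

lemma gaussCDF_mono : Monotone gaussCDF := fun a b hab => by
  have h := gaussCDF_sub_gaussCDF hab
  have : 0 ≤ ∫ x in Ioc a b, gaussPDF x :=
    setIntegral_nonneg measurableSet_Ioc fun x _ => gaussPDF_nonneg x
  linarith

lemma gaussPDF_monotoneOn : MonotoneOn gaussPDF (Iic 0) := fun a ha b hb hab => by
  simp only [mem_Iic] at ha hb
  exact div_le_div_of_nonneg_right (exp_le_exp.mpr (by nlinarith)) (sqrt_nonneg _)

lemma mul_gaussPDF_le_gaussCDF_sub_gaussCDF {a b : ℝ} (hab : a ≤ b) (hb : b ≤ 0) :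
    (b - a) * gaussPDF a ≤ gaussCDF b - gaussCDF a := by
  rw [gaussCDF_sub_gaussCDF hab, ← smul_eq_mul, ← Real.volume_real_Ioc_of_le hab,
    ← setIntegral_const]
  refine setIntegral_mono_on (integrableOn_const measure_Ioc_lt_top.ne)
    integrable_gaussPDF.integrableOn measurableSet_Ioc fun x hx => ?_
  exact gaussPDF_monotoneOn (hx.1.le.trans hx.2 |>.trans hb) (hx.2.trans hb) hx.1.le

lemma neg_mul_gaussCDF_le_gaussPDF (t : ℝ) : -t * gaussCDF t ≤ gaussPDF t := by
  have hFTC : ∫ x in Iic t, -x * gaussPDF x = gaussPDF t := by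
    rw [integral_Iic_of_hasDerivAt_of_tendsto' (fun x _ => hasDerivAt_gaussPDF x)
      integrable_neg_mul_gaussPDF.integrableOn tendsto_gaussPDF_atBot, sub_zero]
  rw [gaussCDF, ← integral_const_mul, ← hFTC]
  refine setIntegral_mono_on (integrable_gaussPDF.const_mul _).integrableOn
    integrable_neg_mul_gaussPDF.integrableOn measurableSet_Iic fun x hx => ?_
  exact mul_le_mul_of_nonneg_right (neg_le_neg hx) (gaussPDF_nonneg x)

lemma one_le_sqrt_two_mul_pi : 1 ≤ √(2 * π) :=
  one_le_sqrt.mpr (by linarith [pi_gt_three])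

lemma sqrt_two_mul_pi_lt_exp_two : √(2 * π) < exp 2 := by
  have hsqrt : √(2 * π) ≤ 3 := sqrt_le_iff.mpr ⟨by norm_num, by linarith [pi_le_four]⟩
  linarith [add_one_lt_exp (two_ne_zero (α := ℝ))]

lemma exp_neg_lt_gaussCDF_neg_sqrt {L : ℝ} (hL : 16 ≤ L) : exp (-L) < gaussCDF (-√L) := by
  set R := √L
  have hR : R ^ 2 = L := sq_sqrt (by linarith)
  have hR4 : 4 ≤ R := le_sqrt_of_sq_le (by linarith)
  have hdensity : exp (-L) < gaussPDF (-R - 1) := by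
    rw [gaussPDF, lt_div_iff₀ (by linarith [one_le_sqrt_two_mul_pi])]
    calc exp (-L) * √(2 * π) < exp (-L) * exp 2 :=
          mul_lt_mul_of_pos_left sqrt_two_mul_pi_lt_exp_two (exp_pos _)
      _ = exp (2 - L) := by rw [← exp_add]; ring_nf
      _ ≤ exp (-(-R - 1) ^ 2 / 2) := exp_le_exp.mpr (by nlinarith)
  have hstrip := mul_gaussPDF_le_gaussCDF_sub_gaussCDF (a := -R - 1) (b := -R) (by linarith)
    (by linarith)
  linarith [gaussCDF_nonneg (-R - 1)]

lemma gaussCDF_neg_sqrt_two_mul_lt_exp_neg {L : ℝ} (hL : 1 ≤ L) :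
    gaussCDF (-√(2 * L)) < exp (-L) := by
  set r := √(2 * L)
  have hr : r ^ 2 = 2 * L := sq_sqrt (by linarith)
  have hr1 : 1 < r := lt_sqrt_of_sq_lt (by linarith)
  have hmills := neg_mul_gaussCDF_le_gaussPDF (-r)
  have hdensity : gaussPDF (-r) ≤ exp (-L) := by
    rw [gaussPDF, div_le_iff₀ (by linarith [one_le_sqrt_two_mul_pi]), neg_sq, hr,
      show -(2 * L) / 2 = -L by ring]
    exact le_mul_of_one_le_right (exp_pos _).le one_le_sqrt_two_mul_pi
  nlinarith [gaussCDF_nonneg (-r), exp_pos (-L)]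

lemma gaussCDF_mul_le_gaussCDF_sub_gaussCDF_sub {t ν r : ℝ} (hr : 1 ≤ r)
    (ht : -(2 * r) ≤ t) (ht' : t ≤ -r) (hν : 0 ≤ ν) (hνr : ν * r ≤ 1 / 10) :
    1 / 8 * gaussCDF t * ν * r ≤ gaussCDF t - gaussCDF (t - ν) := by
  have hstrip := mul_gaussPDF_le_gaussCDF_sub_gaussCDF (a := t - ν) (b := t) (by linarith)
    (by linarith)
  rw [sub_sub_cancel, gaussPDF_sub] at hstrip
  have hexp : 1 / 8 ≤ exp (t * ν - ν ^ 2 / 2) := by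
    have hνsq : ν ^ 2 ≤ 1 / 100 := by nlinarith
    have htν : -(1 / 5) ≤ t * ν := by nlinarith
    linarith [add_one_le_exp (t * ν - ν ^ 2 / 2)]
  have hmills : r * gaussCDF t ≤ gaussPDF t :=
    (mul_le_mul_of_nonneg_right (by linarith) (gaussCDF_nonneg t)).trans
      (neg_mul_gaussCDF_le_gaussPDF t)
  calc 1 / 8 * gaussCDF t * ν * r = ν * (r * gaussCDF t) * (1 / 8) := by ring
    _ ≤ ν * gaussPDF t * exp (t * ν - ν ^ 2 / 2) := by
      gcongr
      exact mul_nonneg hν (gaussPDF_nonneg t)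
    _ ≤ gaussCDF t - gaussCDF (t - ν) := by linarith

/-- Shifting the boundary of a small halfspace inward by `ν` decreases its Gaussian
measure by at least `(1/8)·δ·ν·√(log(1/δ))`. -/
theorem gaussian_halfspace_shift_lower_bound :
    ∃ δ₀ : ℝ, δ₀ ∈ Set.Ioo (0:ℝ) 1 ∧
      ∀ δ ∈ Set.Ioc (0:ℝ) δ₀,
        ∀ ν ∈ Set.Ioo (0:ℝ) (1 / (10 * Real.sqrt (Real.log (1/δ)))),
          ∀ t : ℝ, gaussCDF t = δ →
            (1/8) * δ * ν * Real.sqrt (Real.log (1/δ)) ≤ gaussCDF t - gaussCDF (t - ν) := by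
  refine ⟨exp (-16), ⟨exp_pos _, exp_lt_one_iff.mpr (by norm_num)⟩, ?_⟩
  rintro δ ⟨hδ, hδ₀⟩ ν ⟨hν, hνL⟩ t rfl
  have hδL : gaussCDF t = exp (-log (1 / gaussCDF t)) := by
    rw [one_div, log_inv, neg_neg, exp_log hδ]
  have hL : 16 ≤ log (1 / gaussCDF t) := by
    rw [one_div, log_inv, le_neg, log_le_iff_le_exp hδ]
    exact hδ₀
  set L := log (1 / gaussCDF t)
  have hR : 1 ≤ √L := one_le_sqrt.mpr (by linarith)
  have ht_upper : t < -√L :=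
    gaussCDF_mono.reflect_lt (hδL ▸ exp_neg_lt_gaussCDF_neg_sqrt hL)
  have ht_lower : -√(2 * L) < t :=
    gaussCDF_mono.reflect_lt (hδL ▸ gaussCDF_neg_sqrt_two_mul_lt_exp_neg (by linarith))
  have hsqrt : √(2 * L) ≤ 2 * √L := by
    rw [sqrt_mul zero_le_two]
    gcongr
    exact sqrt_le_iff.mpr ⟨zero_le_two, by norm_num⟩
  have hνR : ν * √L ≤ 1 / 10 := by
    rw [lt_div_iff₀ (by positivity)] at hνL
    linarith
  exact gaussCDF_mul_le_gaussCDF_sub_gaussCDF_sub hR (by linarith) ht_upper.le hν.le hνR
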